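/- Let X be a nonempty finite set, m and ℓ natural numbers, T : (X × {0,1})^m × {0,1}^ℓ → [0,1] a function, D a probability distribution on X, δ > 0, and f, f̃ : X → [0,1]. Suppose that for every one-way restriction R in R(T), it holds that |E_{x∼D}[R(x)·(f(x) − f̃(x))]| ≤ δ. Then |E[T(x, y, r)] − E[T(x, ỹ, r)]| ≤ 2mδ, where x_1, ..., x_m are drawn i.i.d. from D, each label y_i given x_i is an independent Bernoulli(f(x_i)) bit, each label ỹ_i given x_i is an independent Bernoulli(f̃(x_i)) bit, and r is uniform on {0,1}^ℓ, independent of everything else. -/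
import Mathlib


/-- `bern p b` is the probability that a Bernoulli(`p`) bit equals `b`. -/
noncomputable def bern (p : ℝ) (b : Bool) : ℝ := if b then p else 1 - p

/-- Expected output of `T : (X × {0,1})^m × {0,1}^ℓ → [0,1]` when `x 1, …, x m` are
drawn i.i.d. from the distribution `D` on `X`, each label `y i` given `x i` is an
independent Bernoulli(`f (x i)`) bit, and the seed `r` is uniform on `{0,1}^ℓ`. -/
noncomputable def testerExp {X : Type*} [Fintype X] (m l : ℕ)
    (D : X → ℝ) (f : X → ℝ)
    (T : (Fin m → X) → (Fin m → Bool) → (Fin l → Bool) → ℝ) : ℝ :=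
  ∑ x : Fin m → X, ∑ y : Fin m → Bool, ∑ r : Fin l → Bool,
    (∏ i, D (x i)) * (∏ i, bern (f (x i)) (y i)) * ((1 : ℝ) / 2 ^ l) * T x y r

open Finset

lemma bern_nonneg {p : ℝ} (hp : p ∈ Set.Icc (0:ℝ) 1) (b : Bool) : 0 ≤ bern p b := by
  cases b <;> simp [bern] <;> [linarith [hp.2]; exact hp.1]

lemma sum_bern (p : ℝ) : ∑ b : Bool, bern p b = 1 := by
  simp [bern]

lemma bern_sub (p q : ℝ) (b : Bool) :
    bern p b - bern q b = (if b then (1:ℝ) else -1) * (p - q) := by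
  cases b <;> simp [bern] <;> ring

lemma sum_update_card {X : Type*} [Fintype X] [DecidableEq X] {m : ℕ} (κ : Fin m)
    (F : (Fin m → X) → ℝ) :
    ∑ xs : Fin m → X, ∑ x : X, F (Function.update xs κ x)
      = (Fintype.card X : ℝ) * ∑ xs, F xs := by
  have hinv : Function.Involutive
      (fun p : (Fin m → X) × X => (Function.update p.1 κ p.2, p.1 κ)) := by
    intro p
    simp [Function.update_idem]
  have h1 : ∑ p : (Fin m → X) × X, F p.1
      = ∑ p : (Fin m → X) × X, F (Function.update p.1 κ p.2) := by
    rw [← Equiv.sum_comp hinv.toPerm (fun p : (Fin m → X) × X => F (Function.update p.1 κ p.2))]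
    refine Fintype.sum_congr _ _ fun p => ?_
    simp [Function.Involutive.coe_toPerm, Function.update_idem]
  calc ∑ xs : Fin m → X, ∑ x : X, F (Function.update xs κ x)
      = ∑ p : (Fin m → X) × X, F (Function.update p.1 κ p.2) := by
        rw [Fintype.sum_prod_type]
    _ = ∑ p : (Fin m → X) × X, F p.1 := h1.symm
    _ = ∑ xs : Fin m → X, ∑ _x : X, F xs := by rw [Fintype.sum_prod_type]
    _ = (Fintype.card X : ℝ) * ∑ xs, F xs := by
        simp [Finset.sum_const, mul_comm, Finset.mul_sum]

noncomputable def hybExp {X : Type*} [Fintype X] (m l : ℕ)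
    (D : X → ℝ) (f ftil : X → ℝ)
    (T : (Fin m → X) → (Fin m → Bool) → (Fin l → Bool) → ℝ) (k : ℕ) : ℝ :=
  ∑ x : Fin m → X, ∑ y : Fin m → Bool, ∑ r : Fin l → Bool,
    (∏ i, D (x i)) * (∏ i : Fin m, bern (if (i:ℕ) < k then ftil (x i) else f (x i)) (y i))
      * ((1 : ℝ) / 2 ^ l) * T x y r

lemma hyb_step {X : Type*} [Fintype X] [DecidableEq X] [Nonempty X]
    (m l : ℕ)
    (T : (Fin m → X) → (Fin m → Bool) → (Fin l → Bool) → ℝ)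
    (D : X → ℝ) (hD0 : ∀ x, 0 ≤ D x) (hD1 : ∑ x, D x = 1)
    (δ : ℝ)
    (f ftil : X → ℝ)
    (hf : ∀ x, f x ∈ Set.Icc (0 : ℝ) 1) (hftil : ∀ x, ftil x ∈ Set.Icc (0 : ℝ) 1)
    (hreg : ∀ (i : Fin m) (xs : Fin m → X) (y : Fin m → Bool) (r : Fin l → Bool),
      |∑ x, D x * (T (Function.update xs i x) y r * (f x - ftil x))| ≤ δ)
    (k : ℕ) (hk : k < m) :
    |hybExp m l D f ftil T k - hybExp m l D f ftil T (k+1)| ≤ 2 * δ := by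
  set κ : Fin m := ⟨k, hk⟩ with hκ
  -- auxiliary notations
  set W : (Fin m → X) → (Fin m → Bool) → ℝ :=
    fun xs y => ∏ i ∈ (univ : Finset (Fin m)).erase κ, bern (if (i:ℕ) < k then ftil (xs i) else f (xs i)) (y i)
    with hW
  set Q : (Fin m → X) → (Fin m → Bool) → (Fin l → Bool) → ℝ :=
    fun xs y r => (∏ i, D (xs i)) *
      (W xs y * (bern (f (xs κ)) (y κ) - bern (ftil (xs κ)) (y κ))) * ((1:ℝ)/2^l) * T xs y r
    with hQ
  have hdiff : hybExp m l D f ftil T k - hybExp m l D f ftil T (k+1)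
      = ∑ xs : Fin m → X, ∑ y : Fin m → Bool, ∑ r : Fin l → Bool, Q xs y r := by
    simp only [hybExp]
    rw [← Finset.sum_sub_distrib]
    refine Finset.sum_congr rfl fun xs _ => ?_
    rw [← Finset.sum_sub_distrib]
    refine Finset.sum_congr rfl fun y _ => ?_
    rw [← Finset.sum_sub_distrib]
    refine Finset.sum_congr rfl fun r _ => ?_
    have h1 : ∏ i : Fin m, bern (if (i:ℕ) < k then ftil (xs i) else f (xs i)) (y i)
        = bern (f (xs κ)) (y κ) * W xs y := by
      rw [← Finset.mul_prod_erase univ _ (mem_univ κ)]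
      congr 1
      simp [hκ]
    have h2 : ∏ i : Fin m, bern (if (i:ℕ) < k+1 then ftil (xs i) else f (xs i)) (y i)
        = bern (ftil (xs κ)) (y κ) * W xs y := by
      rw [← Finset.mul_prod_erase univ _ (mem_univ κ)]
      congr 1
      · simp [hκ]
      · refine Finset.prod_congr rfl fun i hi => ?_
        have hik : (i:ℕ) ≠ k := by
          have : i ≠ κ := (Finset.mem_erase.mp hi).1
          simpa [hκ, Fin.ext_iff] using this
        have : ((i:ℕ) < k + 1) = ((i:ℕ) < k) := by
          simp only [eq_iff_iff, Nat.lt_succ_iff_lt_or_eq]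
          tauto
        simp only [this]
    rw [h1, h2, hQ]
    ring
  set A : (Fin m → X) → ℝ :=
    fun xs => ∏ i ∈ (univ : Finset (Fin m)).erase κ, D (xs i) with hA
  have hcard : (0:ℝ) < (Fintype.card X : ℝ) := by
    exact_mod_cast Fintype.card_pos
  have key : ∑ xs : Fin m → X, ∑ y : Fin m → Bool, ∑ r : Fin l → Bool,
        ∑ x : X, Q (Function.update xs κ x) y r
      = (Fintype.card X : ℝ) * (hybExp m l D f ftil T k - hybExp m l D f ftil T (k+1)) := by
    rw [hdiff, ← sum_update_card κ (fun xs => ∑ y : Fin m → Bool, ∑ r : Fin l → Bool, Q xs y r)]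
    refine Finset.sum_congr rfl fun xs _ => ?_
    calc ∑ y : Fin m → Bool, ∑ r : Fin l → Bool, ∑ x : X, Q (Function.update xs κ x) y r
        = ∑ y : Fin m → Bool, ∑ x : X, ∑ r : Fin l → Bool, Q (Function.update xs κ x) y r :=
          Finset.sum_congr rfl fun y _ => Finset.sum_comm
      _ = ∑ x : X, ∑ y : Fin m → Bool, ∑ r : Fin l → Bool, Q (Function.update xs κ x) y r :=
          Finset.sum_comm
  have hbound : ∀ (xs : Fin m → X) (y : Fin m → Bool) (r : Fin l → Bool),
      |∑ x : X, Q (Function.update xs κ x) y r| ≤ A xs * W xs y * ((1:ℝ)/2^l) * δ := by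
    intro xs y r
    have hDprod : ∀ x : X, ∏ i : Fin m, D (Function.update xs κ x i) = D x * A xs := by
      intro x
      rw [← Finset.mul_prod_erase univ _ (mem_univ κ), Function.update_self, hA]
      exact congrArg _ (Finset.prod_congr rfl fun i hi => by
        rw [Function.update_of_ne (Finset.mem_erase.mp hi).1])
    have hWupd : ∀ x : X, W (Function.update xs κ x) y = W xs y := by
      intro x
      rw [hW]
      exact Finset.prod_congr rfl fun i hi => by
        rw [Function.update_of_ne (Finset.mem_erase.mp hi).1]
    have hQx : ∀ x : X, Q (Function.update xs κ x) y r
        = (A xs * W xs y * ((1:ℝ)/2^l) * (if y κ then (1:ℝ) else -1)) *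
            (D x * (T (Function.update xs κ x) y r * (f x - ftil x))) := by
      intro x
      simp only [hQ]
      rw [hDprod x, hWupd x, Function.update_self, bern_sub]
      ring
    simp only [hQx]
    rw [← Finset.mul_sum, abs_mul]
    have hAnn : 0 ≤ A xs := Finset.prod_nonneg fun i _ => hD0 _
    have hWnn : 0 ≤ W xs y := Finset.prod_nonneg fun i _ => by
      split
      · exact bern_nonneg (hftil _) _
      · exact bern_nonneg (hf _) _
    have habs1 : |A xs * W xs y * ((1:ℝ)/2^l) * (if y κ then (1:ℝ) else -1)|
        = A xs * W xs y * ((1:ℝ)/2^l) := by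
      rw [abs_mul]
      have : |(if y κ then (1:ℝ) else -1)| = 1 := by split <;> simp
      rw [this, mul_one, abs_of_nonneg (by positivity)]
    rw [habs1]
    exact mul_le_mul_of_nonneg_left (hreg κ xs y r) (by positivity)
  have hsumW : ∀ xs : Fin m → X, ∑ y : Fin m → Bool, W xs y = 2 := by
    intro xs
    have h1 : ∀ y : Fin m → Bool, W xs y
        = ∏ i : Fin m, (if i = κ then (1:ℝ)
            else bern (if (i:ℕ) < k then ftil (xs i) else f (xs i)) (y i)) := by
      intro y
      rw [hW, ← Finset.prod_erase (univ : Finset (Fin m)) (by simp : (if κ = κ then (1:ℝ)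
            else bern (if (κ:ℕ) < k then ftil (xs κ) else f (xs κ)) (y κ)) = 1)]
      exact Finset.prod_congr rfl fun i hi => by
        rw [if_neg (Finset.mem_erase.mp hi).1]
    rw [Finset.sum_congr rfl fun y _ => h1 y,
      ← Fintype.prod_sum (fun i b => (if i = κ then (1:ℝ)
            else bern (if (i:ℕ) < k then ftil (xs i) else f (xs i)) b))]
    have : ∀ i : Fin m, (∑ b : Bool, (if i = κ then (1:ℝ)
            else bern (if (i:ℕ) < k then ftil (xs i) else f (xs i)) b))
        = if i = κ then (2:ℝ) else 1 := by
      intro i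
      by_cases h : i = κ
      · simp [h]
      · simp only [if_neg h]
        exact sum_bern _
    rw [Finset.prod_congr rfl fun i _ => this i, Finset.prod_ite_eq' univ κ (fun _ => (2:ℝ))]
    simp
  have hsumA : ∑ xs : Fin m → X, A xs = (Fintype.card X : ℝ) := by
    have h1 : ∀ xs : Fin m → X, A xs
        = ∏ i : Fin m, (if i = κ then (1:ℝ) else D (xs i)) := by
      intro xs
      rw [hA, ← Finset.prod_erase (univ : Finset (Fin m))
        (by simp : (if κ = κ then (1:ℝ) else D (xs κ)) = 1)]
      exact Finset.prod_congr rfl fun i hi => by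
        rw [if_neg (Finset.mem_erase.mp hi).1]
    rw [Finset.sum_congr rfl fun xs _ => h1 xs,
      ← Fintype.prod_sum (fun (i : Fin m) (x : X) => (if i = κ then (1:ℝ) else D x))]
    have : ∀ i : Fin m, (∑ x : X, (if i = κ then (1:ℝ) else D x))
        = if i = κ then (Fintype.card X : ℝ) else 1 := by
      intro i
      by_cases h : i = κ
      · simp [h, Finset.card_univ]
      · simpa [if_neg h] using hD1
    rw [Finset.prod_congr rfl fun i _ => this i,
      Finset.prod_ite_eq' univ κ (fun _ => ((Fintype.card X : ℝ)))]
    simp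
  have habs : |∑ xs : Fin m → X, ∑ y : Fin m → Bool, ∑ r : Fin l → Bool,
        ∑ x : X, Q (Function.update xs κ x) y r| ≤ (Fintype.card X : ℝ) * (2 * δ) := by
    calc |∑ xs : Fin m → X, ∑ y : Fin m → Bool, ∑ r : Fin l → Bool,
          ∑ x : X, Q (Function.update xs κ x) y r|
        ≤ ∑ xs : Fin m → X, ∑ y : Fin m → Bool, ∑ r : Fin l → Bool,
          |∑ x : X, Q (Function.update xs κ x) y r| := by
          refine (Finset.abs_sum_le_sum_abs _ _).trans (Finset.sum_le_sum fun xs _ => ?_)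
          refine (Finset.abs_sum_le_sum_abs _ _).trans (Finset.sum_le_sum fun y _ => ?_)
          exact Finset.abs_sum_le_sum_abs _ _
      _ ≤ ∑ xs : Fin m → X, ∑ y : Fin m → Bool, ∑ r : Fin l → Bool,
          (A xs * W xs y * ((1:ℝ)/2^l) * δ) := by
          exact Finset.sum_le_sum fun xs _ => Finset.sum_le_sum fun y _ =>
            Finset.sum_le_sum fun r _ => hbound xs y r
      _ = ∑ xs : Fin m → X, ∑ y : Fin m → Bool, (A xs * W xs y * δ) := by
          refine Finset.sum_congr rfl fun xs _ => Finset.sum_congr rfl fun y _ => ?_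
          rw [Finset.sum_const, Finset.card_univ]
          have h2l : (Fintype.card (Fin l → Bool) : ℝ) = 2^l := by
            simp [Fintype.card_fun]
          rw [nsmul_eq_mul, h2l]
          have : (2:ℝ)^l ≠ 0 := by positivity
          field_simp
      _ = ∑ xs : Fin m → X, (A xs * (2 * δ)) := by
          refine Finset.sum_congr rfl fun xs _ => ?_
          calc ∑ y : Fin m → Bool, A xs * W xs y * δ
              = A xs * δ * ∑ y : Fin m → Bool, W xs y := by
                rw [Finset.mul_sum]
                exact Finset.sum_congr rfl fun y _ => by ring
            _ = A xs * (2 * δ) := by rw [hsumW xs]; ring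
      _ = (Fintype.card X : ℝ) * (2 * δ) := by
          rw [← Finset.sum_mul, hsumA]
  rw [key, abs_mul, abs_of_nonneg hcard.le] at habs
  exact le_of_mul_le_mul_left habs hcard

/-- **Oracle simulation.** If `f̃` is an `(R(T), δ)`-regular simulator for `f` under `D`
(where `R(T)` is the family of one-way restrictions of `T`, obtained by hard-wiring an
index `i`, points `xs j` for `j ≠ i`, labels `y`, and a seed `r`), then the expected
output of `T` on samples labeled via `f` and via `f̃` differ by at most `2 m δ`. -/
theorem stmt_5 {X : Type*} [Fintype X] [DecidableEq X] [Nonempty X]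
    (m l : ℕ)
    (T : (Fin m → X) → (Fin m → Bool) → (Fin l → Bool) → ℝ)
    (hT : ∀ x y r, T x y r ∈ Set.Icc (0 : ℝ) 1)
    (D : X → ℝ) (hD0 : ∀ x, 0 ≤ D x) (hD1 : ∑ x, D x = 1)
    (δ : ℝ) (hδ : 0 < δ)
    (f ftil : X → ℝ)
    (hf : ∀ x, f x ∈ Set.Icc (0 : ℝ) 1) (hftil : ∀ x, ftil x ∈ Set.Icc (0 : ℝ) 1)
    (hreg : ∀ (i : Fin m) (xs : Fin m → X) (y : Fin m → Bool) (r : Fin l → Bool),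
      |∑ x, D x * (T (Function.update xs i x) y r * (f x - ftil x))| ≤ δ) :
    |testerExp m l D f T - testerExp m l D ftil T| ≤ 2 * m * δ := by
  have h0 : hybExp m l D f ftil T 0 = testerExp m l D f T := by
    simp [hybExp, testerExp]
  have hm : hybExp m l D f ftil T m = testerExp m l D ftil T := by
    simp only [hybExp, testerExp]
    refine Finset.sum_congr rfl fun x _ => Finset.sum_congr rfl fun y _ =>
      Finset.sum_congr rfl fun r _ => ?_
    simp [Fin.is_lt]
  have tel : testerExp m l D f T - testerExp m l D ftil T
      = ∑ j ∈ Finset.range m, (hybExp m l D f ftil T j - hybExp m l D f ftil T (j+1)) := by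
    rw [Finset.sum_range_sub' (fun j => hybExp m l D f ftil T j), h0, hm]
  calc |testerExp m l D f T - testerExp m l D ftil T|
      = |∑ j ∈ Finset.range m, (hybExp m l D f ftil T j - hybExp m l D f ftil T (j+1))| := by
        rw [tel]
    _ ≤ ∑ j ∈ Finset.range m, |hybExp m l D f ftil T j - hybExp m l D f ftil T (j+1)| :=
        Finset.abs_sum_le_sum_abs _ _
    _ ≤ ∑ j ∈ Finset.range m, 2 * δ :=
        Finset.sum_le_sum fun j hj =>
          hyb_step m l T D hD0 hD1 δ f ftil hf hftil hreg j (Finset.mem_range.mp hj)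
    _ = 2 * m * δ := by
        rw [Finset.sum_const, Finset.card_range, nsmul_eq_mul]
        ring
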